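/- Let (Ω, μ) be a finite probability space of configurations {0,1}^E with the random-cluster weights, q ≥ 1. If A is an increasing event, then (d/dp) φ_{p}(A) = (1/(p(1−p))) · Cov_p(o(ω), 1_A), where o(ω) is the number of open edges, and in particular this derivative is nonnegative. -/

import Mathlib

open Finset

/-- Number of connected components of the subgraph of open edges. -/
noncomputable def rcClusters0 {V : Type} (G : SimpleGraph V) (ω : Sym2 V → Bool) : ℕ :=
  Nat.card (Quotient (Relation.EqvGen.setoid (fun x y => G.Adj x y ∧ ω s(x, y) = true)))

/-- Number of open edges. -/
def rcOpen {V : Type} [Fintype V] [DecidableEq V] (G : SimpleGraph V)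
    [DecidableRel G.Adj] (ω : Sym2 V → Bool) : ℕ :=
  (G.edgeFinset.filter (fun e => ω e = true)).card

/-- Random-cluster weight. -/
noncomputable def rcWeight0 {V : Type} [Fintype V] [DecidableEq V] (G : SimpleGraph V)
    [DecidableRel G.Adj] (p q : ℝ) (ω : Sym2 V → Bool) : ℝ :=
  q ^ rcClusters0 G ω * p ^ rcOpen G ω * (1 - p) ^ (G.edgeFinset.card - rcOpen G ω)

/-- Random-cluster probability of a single configuration. -/
noncomputable def rcPoint0 {V : Type} [Fintype V] [DecidableEq V] (G : SimpleGraph V)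
    [DecidableRel G.Adj] (p q : ℝ) (ω : Sym2 V → Bool) : ℝ :=
  rcWeight0 G p q ω / ∑ ω' : Sym2 V → Bool, rcWeight0 G p q ω'

/-- Random-cluster probability of an event. -/
noncomputable def rcProb0 {V : Type} [Fintype V] [DecidableEq V] (G : SimpleGraph V)
    [DecidableRel G.Adj] (p q : ℝ) (A : Finset (Sym2 V → Bool)) : ℝ :=
  (∑ ω ∈ A, rcWeight0 G p q ω) / ∑ ω : Sym2 V → Bool, rcWeight0 G p q ω

/-!
The derivative is a direct computation: each weight satisfies
`∂ₚ w(ω) = w(ω) (o(ω) - |E| p) / (p (1 - p))`, so differentiating the ratio `φ_p(A)` produces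
the covariance of `o` and `1_A`. Its sign comes from the FKG inequality, whose lattice condition
`φ(ω) φ(ω') ≤ φ(ω ⊓ ω') φ(ω ⊔ ω')` reduces, since `o` is modular and `q ≥ 1`, to the
supermodularity `k(ω) + k(ω') ≤ k(ω ⊓ ω') + k(ω ⊔ ω')` of the number of clusters. The latter
follows by opening the edges of `ω'` one at a time: opening an edge lowers the cluster count by
one exactly when its endpoints lie in different clusters, and endpoints joined in a configuration
stay joined in every larger one.
-/

open Relation

noncomputable def numClasses {α : Type*} (r : α → α → Prop) : ℕ :=
  Nat.card (Quotient (EqvGen.setoid r))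

def addPair {α : Type*} (r : α → α → Prop) (u v : α) : α → α → Prop :=
  fun a b => r a b ∨ (a = u ∧ b = v)

section numClasses

variable {α : Type*} {r s : α → α → Prop} {u v : α}

theorem eqvGen_of_le_eqvGen (h : ∀ a b, r a b → EqvGen s a b) {a b : α} (hab : EqvGen r a b) :
    EqvGen s a b :=
  (EqvGen.is_equivalence s).eqvGen_iff.mp (hab.mono h)

theorem le_eqvGen_addPair : ∀ a b, r a b → EqvGen (addPair r u v) a b :=
  fun _ _ h => .rel _ _ (.inl h)

def eqvGenQuotMap (h : ∀ a b, r a b → EqvGen s a b) :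
    Quotient (EqvGen.setoid r) → Quotient (EqvGen.setoid s) :=
  Quotient.map' id fun _ _ => eqvGen_of_le_eqvGen h

theorem eqvGenQuotMap_surjective (h : ∀ a b, r a b → EqvGen s a b) :
    Function.Surjective (eqvGenQuotMap h) :=
  Quotient.ind fun a => ⟨⟦a⟧, rfl⟩

theorem numClasses_le_of_le_eqvGen [Finite α] (h : ∀ a b, r a b → EqvGen s a b) :
    numClasses s ≤ numClasses r :=
  Nat.card_le_card_of_surjective _ (eqvGenQuotMap_surjective h)

theorem numClasses_congr [Finite α] (hrs : ∀ a b, r a b → EqvGen s a b)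
    (hsr : ∀ a b, s a b → EqvGen r a b) : numClasses r = numClasses s :=
  (numClasses_le_of_le_eqvGen hsr).antisymm (numClasses_le_of_le_eqvGen hrs)

theorem numClasses_addPair_le [Finite α] : numClasses (addPair r u v) ≤ numClasses r :=
  numClasses_le_of_le_eqvGen le_eqvGen_addPair

theorem numClasses_addPair_of_eqvGen [Finite α] (huv : EqvGen r u v) :
    numClasses (addPair r u v) = numClasses r := by
  refine numClasses_congr ?_ le_eqvGen_addPair
  rintro a b (h | ⟨rfl, rfl⟩)
  exacts [.rel _ _ h, huv]

theorem eqvGen_addPair_cases {a b : α} (h : EqvGen (addPair r u v) a b) :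
    EqvGen r a b ∨ ((EqvGen r a u ∨ EqvGen r a v) ∧ (EqvGen r b u ∨ EqvGen r b v)) := by
  set T : α → Prop := fun x => EqvGen r x u ∨ EqvGen r x v
  have hT {x y : α} (hxy : EqvGen r x y) (hy : T y) : T x :=
    hy.imp (hxy.trans _ _ _) (hxy.trans _ _ _)
  have hP : Equivalence fun x y => EqvGen r x y ∨ (T x ∧ T y) :=
    { refl := fun x => .inl (.refl x)
      symm := fun h => h.imp (EqvGen.symm _ _) And.symm
      trans := by
        rintro x y z (hxy | ⟨hx, hy⟩) (hyz | ⟨hy, hz⟩)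
        · exact .inl (hxy.trans _ _ _ hyz)
        · exact .inr ⟨hT hxy hy, hz⟩
        · exact .inr ⟨hx, hT (hyz.symm _ _) hy⟩
        · exact .inr ⟨hx, hz⟩ }
  refine hP.eqvGen_iff.mp (h.mono ?_)
  rintro x y (hxy | ⟨rfl, rfl⟩)
  exacts [.inl (.rel _ _ hxy), .inr ⟨.inl (.refl _), .inr (.refl _)⟩]

theorem numClasses_le_numClasses_addPair_add_one [Finite α] :
    numClasses r ≤ numClasses (addPair r u v) + 1 := by
  classical
  have : Finite (Quotient (EqvGen.setoid (addPair r u v))) := Quotient.finite _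
  let π := eqvGenQuotMap (le_eqvGen_addPair (r := r) (u := u) (v := v))
  -- `π` only merges the classes of `u` and `v`, so it is injective off the class of `v`
  have hinj : Function.Injective fun c => if c = ⟦v⟧ then none else some (π c) := by
    intro c₁ c₂ hc
    induction c₁ using Quotient.ind with | _ a => ?_
    induction c₂ using Quotient.ind with | _ b => ?_
    by_cases ha : (⟦a⟧ : Quotient (EqvGen.setoid r)) = ⟦v⟧ <;>
      by_cases hb : (⟦b⟧ : Quotient (EqvGen.setoid r)) = ⟦v⟧ <;>
      simp only [ha, hb, if_true, if_false, reduceCtorEq, Option.some.injEq] at hc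
    · rw [ha, hb]
    · rcases eqvGen_addPair_cases (Quotient.exact hc) with hab | ⟨ha' | ha', hb' | hb'⟩
      · exact Quotient.sound hab
      · exact Quotient.sound (ha'.trans _ _ _ (hb'.symm _ _))
      · exact absurd (Quotient.sound hb') hb
      · exact absurd (Quotient.sound ha') ha
      · exact absurd (Quotient.sound ha') ha
  simpa [numClasses] using Nat.card_le_card_of_injective _ hinj

theorem numClasses_addPair_lt [Finite α] (huv : ¬EqvGen r u v) :
    numClasses (addPair r u v) < numClasses r := by
  refine numClasses_addPair_le.lt_of_ne fun heq => huv ?_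
  have : Finite (Quotient (EqvGen.setoid r)) := Quotient.finite _
  let π := eqvGenQuotMap (le_eqvGen_addPair (r := r) (u := u) (v := v))
  have hπ : Function.Bijective π :=
    (Nat.bijective_iff_surjective_and_card π).mpr ⟨eqvGenQuotMap_surjective _, heq.symm⟩
  have huv' : π ⟦u⟧ = π ⟦v⟧ := Quotient.sound (.rel _ _ (.inr ⟨rfl, rfl⟩))
  exact Quotient.exact (hπ.injective huv')

theorem numClasses_addPair_add_le [Finite α] (hrs : ∀ a b, r a b → s a b) :
    numClasses (addPair r u v) + numClasses s ≤ numClasses r + numClasses (addPair s u v) := by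
  by_cases hs : EqvGen s u v
  · rw [numClasses_addPair_of_eqvGen hs]
    exact Nat.add_le_add_right numClasses_addPair_le _
  · have hr : ¬EqvGen r u v := fun h => hs (h.mono hrs)
    have := numClasses_addPair_lt hr
    have := numClasses_le_numClasses_addPair_add_one (r := s) (u := u) (v := v)
    omega

end numClasses

theorem add_le_inf_add_sup_of_update {ι : Type*} [Finite ι] [DecidableEq ι]
    (f : (ι → Bool) → ℕ)
    (hf : ∀ ν ν' : ι → Bool, ν ≤ ν' → ∀ i,
      f (Function.update ν i true) + f ν' ≤ f ν + f (Function.update ν' i true))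
    (a b : ι → Bool) : f a + f b ≤ f (a ⊓ b) + f (a ⊔ b) := by
  have := Fintype.ofFinite ι
  have hchain (D : Finset ι) : ∀ ν ν' : ι → Bool, ν ≤ ν' →
      f (ν ⊔ fun i => decide (i ∈ D)) + f ν' ≤ f ν + f (ν' ⊔ fun i => decide (i ∈ D)) := by
    induction D using Finset.induction_on with
    | empty => simp [show (fun _ : ι => false) = ⊥ from rfl]
    | insert i D _ ih =>
      intro ν ν' hle
      have hins (μ : ι → Bool) : (μ ⊔ fun j => decide (j ∈ insert i D)) =
          Function.update (μ ⊔ fun j => decide (j ∈ D)) i true := by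
        ext j
        by_cases hj : j = i <;> simp [hj]
      rw [hins, hins]
      have := hf _ _ (sup_le_sup_right hle fun j => decide (j ∈ D)) i
      have := ih ν ν' hle
      omega
  have h := hchain {i | b i} (a ⊓ b) a inf_le_left
  have hb : (a ⊓ b ⊔ fun i => decide (i ∈ ({i | b i} : Finset ι))) = b := by
    ext i; cases ha : a i <;> cases hb : b i <;> simp [ha, hb]
  have hab : (a ⊔ fun i => decide (i ∈ ({i | b i} : Finset ι))) = a ⊔ b := by
    ext i; cases ha : a i <;> cases hb : b i <;> simp [ha, hb]
  rw [hb, hab] at h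
  omega

section Clusters

variable {V : Type} (G : SimpleGraph V)

def openAdj (ω : Sym2 V → Bool) (x y : V) : Prop :=
  G.Adj x y ∧ ω s(x, y) = true

theorem rcClusters0_eq_numClasses (ω : Sym2 V → Bool) :
    rcClusters0 G ω = numClasses (openAdj G ω) :=
  rfl

theorem openAdj_mono {ω ω' : Sym2 V → Bool} (h : ω ≤ ω') (x y : V) :
    openAdj G ω x y → openAdj G ω' x y
  | ⟨hxy, hω⟩ => ⟨hxy, top_unique (hω ▸ h s(x, y) :)⟩

variable [DecidableEq V]

theorem rcClusters0_update_of_adj [Finite V] {u v : V} (huv : G.Adj u v) (ω : Sym2 V → Bool) :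
    rcClusters0 G (Function.update ω s(u, v) true) = numClasses (addPair (openAdj G ω) u v) := by
  refine numClasses_congr ?_ ?_
  · rintro a b ⟨hab, hω⟩
    by_cases he : s(a, b) = s(u, v)
    · rcases Sym2.eq_iff.mp he with ⟨rfl, rfl⟩ | ⟨rfl, rfl⟩
      · exact .rel _ _ (.inr ⟨rfl, rfl⟩)
      · exact .symm _ _ (.rel _ _ (.inr ⟨rfl, rfl⟩))
    · rw [Function.update_of_ne he] at hω
      exact .rel _ _ (.inl ⟨hab, hω⟩)
  · rintro a b (h | ⟨rfl, rfl⟩)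
    · exact .rel _ _ (openAdj_mono G (le_update_iff.mpr ⟨le_top, fun _ _ => le_rfl⟩) a b h)
    · exact .rel _ _ ⟨huv, Function.update_self ..⟩

theorem rcClusters0_update_of_not_adj {u v : V} (huv : ¬G.Adj u v) (ω : Sym2 V → Bool) :
    rcClusters0 G (Function.update ω s(u, v) true) = rcClusters0 G ω := by
  have : openAdj G (Function.update ω s(u, v) true) = openAdj G ω := by
    ext a b
    refine and_congr_right fun hab => ?_
    have he : s(a, b) ≠ s(u, v) := fun he => huv (he ▸ G.mem_edgeSet.mpr hab : s(u, v) ∈ G.edgeSet)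
    rw [Function.update_of_ne he]
  rw [rcClusters0_eq_numClasses, this]
  rfl

theorem rcClusters0_update_add_le [Finite V] {ω ω' : Sym2 V → Bool} (hle : ω ≤ ω') (e : Sym2 V) :
    rcClusters0 G (Function.update ω e true) + rcClusters0 G ω' ≤
      rcClusters0 G ω + rcClusters0 G (Function.update ω' e true) := by
  induction e using Sym2.ind with | _ u v => ?_
  by_cases huv : G.Adj u v
  · rw [rcClusters0_update_of_adj G huv, rcClusters0_update_of_adj G huv]
    exact numClasses_addPair_add_le (openAdj_mono G hle)
  · rw [rcClusters0_update_of_not_adj G huv, rcClusters0_update_of_not_adj G huv]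

end Clusters

theorem rcClusters0_add_le_inf_add_sup {V : Type} [Finite V] (G : SimpleGraph V)
    (a b : Sym2 V → Bool) :
    rcClusters0 G a + rcClusters0 G b ≤ rcClusters0 G (a ⊓ b) + rcClusters0 G (a ⊔ b) := by
  classical
  exact add_le_inf_add_sup_of_update _ (fun _ _ h => rcClusters0_update_add_le G h) a b

theorem natCast_mul_pow_sub_one {x : ℝ} (hx : x ≠ 0) (n : ℕ) :
    (n : ℝ) * x ^ (n - 1) = n * x ^ n / x := by
  cases n with
  | zero => simp
  | succ n => rw [Nat.add_sub_cancel, pow_succ, mul_div_assoc, mul_div_cancel_right₀ _ hx]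

theorem hasDerivAt_pow_mul_one_sub_pow {p : ℝ} (hp0 : p ≠ 0) (hp1 : p ≠ 1) (a b : ℕ) :
    HasDerivAt (fun x => x ^ a * (1 - x) ^ b) (p ^ a * (1 - p) ^ b * (a / p - b / (1 - p))) p := by
  have h1p : 1 - p ≠ 0 := sub_ne_zero.mpr hp1.symm
  have h := (hasDerivAt_pow a p).fun_mul (((hasDerivAt_id' p).const_sub 1).fun_pow b)
  refine h.congr_deriv ?_
  rw [natCast_mul_pow_sub_one hp0, natCast_mul_pow_sub_one h1p]
  field_simp
  ring

theorem hasDerivAt_sum_div_sum {ι : Type*} [Fintype ι] (A : Finset ι) {w : ι → ℝ → ℝ}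
    {g : ι → ℝ} {κ c p : ℝ} (hw : ∀ i, HasDerivAt (w i) (w i p * (κ * g i - c)) p)
    (hZ : ∑ i, w i p ≠ 0) :
    HasDerivAt (fun x => (∑ i ∈ A, w i x) / ∑ i, w i x)
      (κ * ((∑ i ∈ A, g i * (w i p / ∑ j, w j p)) -
        (∑ i, g i * (w i p / ∑ j, w j p)) * ∑ i ∈ A, w i p / ∑ j, w j p)) p := by
  have hA := HasDerivAt.fun_sum (u := A) fun i _ => hw i
  have hU := HasDerivAt.fun_sum (u := univ) fun i _ => hw i
  refine (hA.div hU hZ).congr_deriv ?_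
  have hw' (i : ι) : w i p * (κ * g i - c) = κ * (g i * w i p) - c * w i p := by ring
  simp only [hw', sum_sub_distrib, ← mul_sum, ← mul_div_assoc, ← sum_div]
  field_simp
  ring

section Weight

variable {V : Type} [Fintype V] [DecidableEq V] (G : SimpleGraph V) [DecidableRel G.Adj]

theorem rcOpen_le_card (ω : Sym2 V → Bool) : rcOpen G ω ≤ #G.edgeFinset :=
  card_filter_le _ _

theorem rcOpen_mono : Monotone (rcOpen G) := fun _ _ h =>
  card_le_card <| monotone_filter_right _ fun e _ he => top_unique (he ▸ h e :)

theorem rcOpen_inf_add_sup (a b : Sym2 V → Bool) :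
    rcOpen G (a ⊓ b) + rcOpen G (a ⊔ b) = rcOpen G a + rcOpen G b := by
  have hinf : G.edgeFinset.filter (fun e => (a ⊓ b) e = true) =
      G.edgeFinset.filter (fun e => a e = true) ∩ G.edgeFinset.filter (fun e => b e = true) := by
    rw [← filter_and]; simp
  have hsup : G.edgeFinset.filter (fun e => (a ⊔ b) e = true) =
      G.edgeFinset.filter (fun e => a e = true) ∪ G.edgeFinset.filter (fun e => b e = true) := by
    rw [← filter_or]; simp
  rw [rcOpen, rcOpen, rcOpen, rcOpen, hinf, hsup, add_comm, card_union_add_card_inter]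

variable {p q : ℝ}

theorem rcWeight0_pos (hq : 0 < q) (hp0 : 0 < p) (hp1 : p < 1) (ω : Sym2 V → Bool) :
    0 < rcWeight0 G p q ω := by
  have := sub_pos.mpr hp1
  unfold rcWeight0
  positivity

theorem sum_rcWeight0_pos (hq : 0 < q) (hp0 : 0 < p) (hp1 : p < 1) :
    0 < ∑ ω, rcWeight0 G p q ω :=
  sum_pos (fun ω _ => rcWeight0_pos G hq hp0 hp1 ω) univ_nonempty

theorem rcWeight0_mul_le_inf_mul_sup (hq : 1 ≤ q) (hp0 : 0 ≤ p) (hp1 : p ≤ 1)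
    (a b : Sym2 V → Bool) :
    rcWeight0 G p q a * rcWeight0 G p q b ≤
      rcWeight0 G p q (a ⊓ b) * rcWeight0 G p q (a ⊔ b) := by
  have := sub_nonneg.mpr hp1
  have hp : p ^ rcOpen G a * p ^ rcOpen G b = p ^ rcOpen G (a ⊓ b) * p ^ rcOpen G (a ⊔ b) := by
    rw [← pow_add, ← pow_add, rcOpen_inf_add_sup]
  have hp' : (1 - p) ^ (#G.edgeFinset - rcOpen G a) * (1 - p) ^ (#G.edgeFinset - rcOpen G b) =
      (1 - p) ^ (#G.edgeFinset - rcOpen G (a ⊓ b)) *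
        (1 - p) ^ (#G.edgeFinset - rcOpen G (a ⊔ b)) := by
    have := rcOpen_inf_add_sup G a b
    have := rcOpen_le_card G a
    have := rcOpen_le_card G b
    have := rcOpen_le_card G (a ⊓ b)
    have := rcOpen_le_card G (a ⊔ b)
    rw [← pow_add, ← pow_add]
    congr 1
    omega
  have hk : q ^ rcClusters0 G a * q ^ rcClusters0 G b ≤
      q ^ rcClusters0 G (a ⊓ b) * q ^ rcClusters0 G (a ⊔ b) := by
    rw [← pow_add, ← pow_add]
    exact pow_le_pow_right₀ hq (rcClusters0_add_le_inf_add_sup G a b)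
  unfold rcWeight0
  calc _ = q ^ rcClusters0 G a * q ^ rcClusters0 G b * ((p ^ rcOpen G a * p ^ rcOpen G b) *
        ((1 - p) ^ (#G.edgeFinset - rcOpen G a) * (1 - p) ^ (#G.edgeFinset - rcOpen G b))) := by
        ring
    _ ≤ q ^ rcClusters0 G (a ⊓ b) * q ^ rcClusters0 G (a ⊔ b) * ((p ^ rcOpen G a * p ^ rcOpen G b) *
        ((1 - p) ^ (#G.edgeFinset - rcOpen G a) * (1 - p) ^ (#G.edgeFinset - rcOpen G b))) := by
        gcongr
    _ = _ := by
        rw [hp, hp']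
        ring

theorem hasDerivAt_rcWeight0 (hp0 : p ≠ 0) (hp1 : p ≠ 1) (ω : Sym2 V → Bool) :
    HasDerivAt (fun x => rcWeight0 G x q ω)
      (rcWeight0 G p q ω * (1 / (p * (1 - p)) * rcOpen G ω - #G.edgeFinset / (1 - p))) p := by
  have h1p : 1 - p ≠ 0 := sub_ne_zero.mpr hp1.symm
  have h := (hasDerivAt_pow_mul_one_sub_pow hp0 hp1 (rcOpen G ω)
    (#G.edgeFinset - rcOpen G ω)).const_mul (q ^ rcClusters0 G ω)
  simp only [← mul_assoc] at h
  refine h.congr_deriv ?_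
  rw [Nat.cast_sub (rcOpen_le_card G ω), rcWeight0]
  field_simp
  ring

theorem sum_rcPoint0 (hq : 0 < q) (hp0 : 0 < p) (hp1 : p < 1) :
    ∑ ω, rcPoint0 G p q ω = 1 := by
  simp only [rcPoint0, ← sum_div]
  exact div_self (sum_rcWeight0_pos G hq hp0 hp1).ne'

theorem rcPoint0_mul_le_inf_mul_sup (hq : 1 ≤ q) (hp0 : 0 ≤ p) (hp1 : p ≤ 1)
    (a b : Sym2 V → Bool) :
    rcPoint0 G p q a * rcPoint0 G p q b ≤ rcPoint0 G p q (a ⊓ b) * rcPoint0 G p q (a ⊔ b) := by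
  simp only [rcPoint0, div_mul_div_comm]
  exact div_le_div_of_nonneg_right (rcWeight0_mul_le_inf_mul_sup G hq hp0 hp1 a b)
    (mul_self_nonneg _)

theorem rcOpen_covariance_nonneg (hq : 1 ≤ q) (hp0 : 0 < p) (hp1 : p < 1)
    {A : Finset (Sym2 V → Bool)} (hA : ∀ ω ω' : Sym2 V → Bool, ω ≤ ω' → ω ∈ A → ω' ∈ A) :
    0 ≤ (∑ ω ∈ A, (rcOpen G ω : ℝ) * rcPoint0 G p q ω) -
      (∑ ω, (rcOpen G ω : ℝ) * rcPoint0 G p q ω) * ∑ ω ∈ A, rcPoint0 G p q ω := by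
  have hq0 : 0 < q := zero_lt_one.trans_le hq
  have hfkg := fkg (μ := rcPoint0 G p q) (f := fun ω => (rcOpen G ω : ℝ))
    (g := fun ω => if ω ∈ A then 1 else 0)
    (fun ω => (div_pos (rcWeight0_pos G hq0 hp0 hp1 ω) (sum_rcWeight0_pos G hq0 hp0 hp1)).le)
    (fun ω => Nat.cast_nonneg _) (fun ω => by positivity)
    (fun _ _ h => Nat.cast_le.mpr (rcOpen_mono G h))
    (fun ω ω' h => by
      by_cases hω : ω ∈ A
      · simp [hω, hA ω ω' h]
      · simp only [hω, if_false]; positivity)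
    (rcPoint0_mul_le_inf_mul_sup G hq hp0.le hp1.le)
  simp only [sum_rcPoint0 G hq0 hp0 hp1, one_mul, mul_ite, mul_one, mul_zero,
    sum_ite_mem, univ_inter] at hfkg
  simp only [mul_comm (rcPoint0 G p q _)] at hfkg
  linarith

end Weight

/-- For `q ≥ 1`, `p ∈ (0,1)` and an increasing event `A`,
`(d/dp) φ_p(A) = (1/(p(1−p))) Cov_p(o(ω), 1_A)`, and this derivative is nonnegative. -/
theorem stmt13 {V : Type} [Fintype V] [DecidableEq V] (G : SimpleGraph V)
    [DecidableRel G.Adj] (q : ℝ) (hq : 1 ≤ q) (p : ℝ) (hp0 : 0 < p) (hp1 : p < 1)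
    (A : Finset (Sym2 V → Bool))
    (hA : ∀ ω ω' : Sym2 V → Bool, ω ≤ ω' → ω ∈ A → ω' ∈ A) :
    HasDerivAt (fun p' => rcProb0 G p' q A)
      ((1 / (p * (1 - p))) *
        ((∑ ω ∈ A, (rcOpen G ω : ℝ) * rcPoint0 G p q ω) -
          (∑ ω : Sym2 V → Bool, (rcOpen G ω : ℝ) * rcPoint0 G p q ω) *
            (∑ ω ∈ A, rcPoint0 G p q ω))) p ∧
    0 ≤ (1 / (p * (1 - p))) *
        ((∑ ω ∈ A, (rcOpen G ω : ℝ) * rcPoint0 G p q ω) -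
          (∑ ω : Sym2 V → Bool, (rcOpen G ω : ℝ) * rcPoint0 G p q ω) *
            (∑ ω ∈ A, rcPoint0 G p q ω)) := by
  have hZ := sum_rcWeight0_pos G (zero_lt_one.trans_le hq) hp0 hp1
  refine ⟨hasDerivAt_sum_div_sum A (hasDerivAt_rcWeight0 G hp0.ne' hp1.ne) hZ.ne', ?_⟩
  have := sub_pos.mpr hp1
  exact mul_nonneg (by positivity) (rcOpen_covariance_nonneg G hq hp0 hp1 hA)
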